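/- For every permutation σ of {1,2} and every non-negative integer n, F_σ(n) ∩ F_{σ̄}(1) = {0}. -/

import Mathlib

open Submodule

/-- For a permutation `σ` of `{1,2}`, the increasing sequence of subspaces `F_σ(n)`:
`F_σ(0) = ⊥`, `F_σ(n+1) = Σ_i (F_σ(n) + Vᵢ) ⊓ (F_σ(n) + W_{σ(i)})`. -/
noncomputable def Fsig {K E : Type*} [Field K] [AddCommGroup E] [Module K E]
    (V W : Fin 2 → Submodule K E) (σ : Equiv.Perm (Fin 2)) : ℕ → Submodule K E
  | 0 => ⊥
  | n + 1 => ⨆ i : Fin 2, (Fsig V W σ n ⊔ V i) ⊓ (Fsig V W σ n ⊔ W (σ i))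

/-!
Let `s` be the reflection that is `+1` on `V₀` and `-1` on `V₁`, `t` the one that is `+1` on
`W_{σ(0)}` and `-1` on `W_{σ(1)}`, and `u = s t`. Since `s u s = u⁻¹`, the generalized
`1`-eigenspace `G` of `u` is `s`-invariant, and a vector `x` of `(F + Vᵢ) ∩ (F + W_{σ(i)})` with
`F ≤ G` satisfies `u x ≡ x` modulo `G`, hence lies in `G`; so every `F_σ(n)` lies in `G`. On the
other hand `V_i ∩ W_{σ̄(i)}` lies in the `(-1)`-eigenspace of `u`, so `F_σ̄(1)` does, and `1 ≠ -1`.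
-/

open Module End Set

namespace LinearMap

variable {R M : Type*} [CommRing R] [AddCommGroup M] [Module R M] {p q : Submodule R M}

noncomputable def reflectionOfIsCompl (h : IsCompl p q) : End R M :=
  ofIsCompl h p.subtype (-q.subtype)

theorem le_eigenspace_one_reflectionOfIsCompl (h : IsCompl p q) :
    p ≤ (reflectionOfIsCompl h).eigenspace 1 := fun x hx => by
  rw [mem_eigenspace_iff, one_smul]
  exact ofIsCompl_apply_left h ⟨x, hx⟩

theorem le_eigenspace_neg_one_reflectionOfIsCompl (h : IsCompl p q) :
    q ≤ (reflectionOfIsCompl h).eigenspace (-1) := fun x hx => by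
  rw [mem_eigenspace_iff, neg_one_smul]
  exact ofIsCompl_apply_right h ⟨x, hx⟩

theorem reflectionOfIsCompl_mul_self (h : IsCompl p q) :
    reflectionOfIsCompl h * reflectionOfIsCompl h = 1 := by
  ext x
  obtain ⟨u, v, rfl, -⟩ := existsUnique_add_of_isCompl h x
  simp [reflectionOfIsCompl]

end LinearMap

namespace Module.End

variable {R M : Type*} [CommRing R] [AddCommGroup M] [Module R M] {s t : End R M}

theorem inf_le_eigenspace_mul {P Q : Submodule R M} {a b : R} (hP : P ≤ s.eigenspace a)
    (hQ : Q ≤ t.eigenspace b) : P ⊓ Q ≤ (s * t).eigenspace (a * b) := fun x hx => by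
  rw [mem_eigenspace_iff, mul_apply, mem_eigenspace_iff.mp (hQ hx.2), map_smul,
    mem_eigenspace_iff.mp (hP hx.1), smul_smul, mul_comm]

theorem mem_maxGenEigenspace_of_sub_smul_one_apply_mem {f : End R M} {μ : R} {x : M}
    (h : (f - μ • 1) x ∈ f.maxGenEigenspace μ) : x ∈ f.maxGenEigenspace μ := by
  obtain ⟨k, hk⟩ := (mem_maxGenEigenspace _ _ _).mp h
  exact (mem_maxGenEigenspace _ _ _).mpr ⟨k + 1, by rwa [pow_succ, mul_apply]⟩

/-- `s` conjugates `u = s * t` to `u⁻¹ = t * s`, and `u⁻¹ - 1 = -u⁻¹ (u - 1)` kills the same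
vectors as `u - 1` after `k` iterations. -/
theorem mapsTo_maxGenEigenspace_one_mul (hs : s * s = 1) (ht : t * t = 1) :
    MapsTo s ((s * t).maxGenEigenspace 1) ((s * t).maxGenEigenspace 1) := by
  intro x hx
  obtain ⟨k, hk⟩ := (mem_maxGenEigenspace _ _ _).mp hx
  rw [one_smul] at hk
  refine (mem_maxGenEigenspace _ _ _).mpr ⟨k, ?_⟩
  have hvu : t * s * (s * t) = 1 := by rw [mul_assoc, ← mul_assoc s, hs, one_mul, ht]
  have huv : s * t * (t * s) = 1 := by rw [mul_assoc, ← mul_assoc t, ht, one_mul, hs]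
  have hsub : t * s - 1 = -(t * s) * (s * t - 1) := by
    rw [neg_mul, mul_sub, hvu, mul_one, neg_sub, sub_eq_neg_add]
  have hconj : SemiconjBy s (t * s) (s * t) := (mul_assoc s t s).symm
  have hcomm : Commute (t * s) (s * t) := hvu.trans huv.symm
  replace hconj := hconj.sub_right (.one_right s)
  replace hcomm := (hcomm.sub_right (.one_right _)).neg_left
  rw [one_smul, ← mul_apply, ← (hconj.pow_right k).eq, hsub, hcomm.mul_pow, mul_apply,
    mul_apply, hk, map_zero, map_zero]

theorem sup_inf_sup_le_maxGenEigenspace_one_mul (hs : s * s = 1) (ht : t * t = 1)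
    {F P Q : Submodule R M} {ε : R} (hε : ε * ε = 1) (hF : F ≤ (s * t).maxGenEigenspace 1)
    (hP : P ≤ s.eigenspace ε) (hQ : Q ≤ t.eigenspace ε) :
    (F ⊔ P) ⊓ (F ⊔ Q) ≤ (s * t).maxGenEigenspace 1 := by
  set G := (s * t).maxGenEigenspace 1
  rintro x ⟨hxP, hxQ⟩
  obtain ⟨f, hf, p, hp, rfl⟩ := mem_sup.mp hxP
  obtain ⟨f', hf', q, hq, hx⟩ := mem_sup.mp hxQ
  have hsp : s p = ε • p := mem_eigenspace_iff.mp (hP hp)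
  have htq : t q = ε • q := mem_eigenspace_iff.mp (hQ hq)
  have hsG := mapsTo_maxGenEigenspace_one_mul hs ht
  have huG := mapsTo_maxGenEigenspace_of_comm (Commute.refl (s * t)) 1
  have hu : (s * t) (f + p) = (s * t) f' + ε • s q := by
    rw [← hx, mul_apply, map_add, htq, map_add, map_smul]; rfl
  have hsq : s q = s f + ε • p - s f' := by rw [eq_sub_of_add_eq' hx, map_sub, map_add, hsp]
  refine mem_maxGenEigenspace_of_sub_smul_one_apply_mem ?_
  have key : (s * t - (1 : R) • 1) (f + p) = (s * t) f' - ε • s f' + ε • s f - f := by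
    rw [one_smul, LinearMap.sub_apply, one_apply, hu, hsq, smul_sub, smul_add, smul_smul, hε,
      one_smul]
    abel
  rw [key]
  exact G.sub_mem (G.add_mem (G.sub_mem (huG (hF hf')) (G.smul_mem _ (hsG (hF hf'))))
    (G.smul_mem _ (hsG (hF hf)))) (hF hf)

end Module.End

theorem IsCompl.apply_perm_fin_two {α : Type*} [Lattice α] [BoundedOrder α] {W : Fin 2 → α}
    (h : IsCompl (W 0) (W 1)) (σ : Equiv.Perm (Fin 2)) : IsCompl (W (σ 0)) (W (σ 1)) := by
  have : σ 0 = 0 ∧ σ 1 = 1 ∨ σ 0 = 1 ∧ σ 1 = 0 := by revert σ; decide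
  rcases this with ⟨h0, h1⟩ | ⟨h0, h1⟩
  · rwa [h0, h1]
  · rw [h0, h1]; exact h.symm

section Fsig

variable {K E : Type*} [Field K] [AddCommGroup E] [Module K E] {V W : Fin 2 → Submodule K E}
  {σ : Equiv.Perm (Fin 2)} {s t : End K E} {ε : Fin 2 → K}

theorem Fsig_le_maxGenEigenspace_one_mul (hs : s * s = 1) (ht : t * t = 1)
    (hε : ∀ i, ε i * ε i = 1) (hV : ∀ i, V i ≤ s.eigenspace (ε i))
    (hW : ∀ i, W (σ i) ≤ t.eigenspace (ε i)) (n : ℕ) :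
    Fsig V W σ n ≤ (s * t).maxGenEigenspace 1 := by
  induction n with
  | zero => exact bot_le
  | succ n ih =>
    exact iSup_le fun i => sup_inf_sup_le_maxGenEigenspace_one_mul hs ht (hε i) ih (hV i) (hW i)

theorem Fsig_one_le_eigenspace_neg_one_mul (hε : ∀ i, ε i * ε i = 1)
    (hV : ∀ i, V i ≤ s.eigenspace (ε i)) (hW : ∀ i, W (σ i) ≤ t.eigenspace (-ε i)) :
    Fsig V W σ 1 ≤ (s * t).eigenspace (-1) :=
  iSup_le fun i => by simpa [Fsig, hε i] using inf_le_eigenspace_mul (hV i) (hW i)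

end Fsig

theorem stmt7_general {K E : Type*} [Field K] [AddCommGroup E] [Module K E]
    (hchar : (2 : K) ≠ 0)
    (V W : Fin 2 → Submodule K E)
    (hV : IsCompl (V 0) (V 1)) (hW : IsCompl (W 0) (W 1)) :
    ∀ σ σ' : Equiv.Perm (Fin 2), σ ≠ σ' →
      ∀ n : ℕ, Fsig V W σ n ⊓ Fsig V W σ' 1 = ⊥ := by
  intro σ σ' hne n
  have hσ' : σ' 0 = σ 1 ∧ σ' 1 = σ 0 := by revert σ σ'; decide
  have hWσ := hW.apply_perm_fin_two σ
  set s := LinearMap.reflectionOfIsCompl hV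
  set t := LinearMap.reflectionOfIsCompl hWσ
  have hVs : ∀ i, V i ≤ s.eigenspace (![1, -1] i) := Fin.forall_fin_two.mpr
    ⟨LinearMap.le_eigenspace_one_reflectionOfIsCompl hV,
      LinearMap.le_eigenspace_neg_one_reflectionOfIsCompl hV⟩
  have hWt : ∀ i, W (σ i) ≤ t.eigenspace (![1, -1] i) := Fin.forall_fin_two.mpr
    ⟨LinearMap.le_eigenspace_one_reflectionOfIsCompl hWσ,
      LinearMap.le_eigenspace_neg_one_reflectionOfIsCompl hWσ⟩
  have hWt' : ∀ i, W (σ' i) ≤ t.eigenspace (-![1, -1] i) := by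
    simpa [Fin.forall_fin_two, hσ'] using And.symm (Fin.forall_fin_two.mp hWt)
  have hε : ∀ i, ![(1 : K), -1] i * ![1, -1] i = 1 := by simp [Fin.forall_fin_two]
  have hsign : (1 : K) ≠ -1 := fun h => hchar (by linear_combination h)
  exact disjoint_iff.mp <| (disjoint_genEigenspace (s * t) hsign ⊤ 1).mono
    (Fsig_le_maxGenEigenspace_one_mul (LinearMap.reflectionOfIsCompl_mul_self hV)
      (LinearMap.reflectionOfIsCompl_mul_self hWσ) hε hVs hWt n)
    (Fsig_one_le_eigenspace_neg_one_mul hε hVs hWt')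

/-- For every permutation `σ` of `{1,2}` (with `σ̄` the other permutation)
and every `n`, `F_σ(n) ∩ F_σ̄(1) = {0}`. -/
theorem stmt7 {K E : Type*} [Field K] [AddCommGroup E] [Module K E]
    [FiniteDimensional K E] (hchar : (2 : K) ≠ 0)
    (V W : Fin 2 → Submodule K E)
    (hV : IsCompl (V 0) (V 1)) (hW : IsCompl (W 0) (W 1)) :
    ∀ σ σ' : Equiv.Perm (Fin 2), σ ≠ σ' →
      ∀ n : ℕ, Fsig V W σ n ⊓ Fsig V W σ' 1 = ⊥ :=
  stmt7_general hchar V W hV hW
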